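/- If every token in a decoded sequence is a full terminal of the grammar's scanner (no token spans a partial subterminal), then the concatenated output's decomposition into terminals is exactly the concatenation of the per-token terminal sequences; conversely, if some token ends mid-terminal (a start or continuation subterminal), the terminal boundary crossing that token position does not coincide with the token boundary. -/

import Mathlib

/-- `IsDecomp Term s parts`: `parts` is a factorization of `s` into terminal matches. -/
def IsDecomp {A : Type} (Term : Set (List A)) (s : List A) (parts : List (List A)) : Prop :=
  parts.flatten = s ∧ ∀ p ∈ parts, p ∈ Term

/-- The boundary positions of a factorization `parts`: lengths of concatenations of
initial segments of `parts`. -/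
def boundaries {A : Type} (parts : List (List A)) : Set ℕ :=
  {n | ∃ j ≤ parts.length, n = ((parts.take j).flatten).length}

theorem IsDecomp.flatten {A : Type} {Term : Set (List A)} {ts : List (List A)}
    {seqs : List (List (List A))} (h : List.Forall₂ (IsDecomp Term) ts seqs) :
    IsDecomp Term ts.flatten seqs.flatten := by
  induction h with
  | nil => exact ⟨rfl, by simp⟩
  | cons hd _ ih =>
    refine ⟨?_, ?_⟩
    · rw [List.flatten_cons, List.flatten_cons, List.flatten_append, hd.1, ih.1]
    · simp only [List.flatten_cons, List.mem_append]
      rintro p (hp | hp)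
      exacts [hd.2 p hp, ih.2 p hp]

theorem length_flatten_take_mono {A : Type} (parts : List (List A)) :
    Monotone fun j => ((parts.take j).flatten).length :=
  fun _ _ h => ((List.take_prefix_take_left h).flatten).length_le

theorem not_mem_boundaries_of_lt_of_lt {A : Type} {parts : List (List A)} {j n : ℕ}
    (hlo : ((parts.take j).flatten).length < n)
    (hhi : n < ((parts.take (j + 1)).flatten).length) :
    n ∉ boundaries parts := by
  rintro ⟨k, -, rfl⟩
  rcases le_or_gt k j with hkj | hjk
  · exact (length_flatten_take_mono parts hkj).not_gt hlo
  · exact (length_flatten_take_mono parts hjk).not_gt hhi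

theorem full_terminal_tokens_decomp_general {A : Type} (Term : Set (List A))
    (decomp : List A → List (List A))
    (huniq : ∀ s parts, IsDecomp Term s parts → parts = decomp s) :
    (∀ (ts : List (List A)) (seqs : List (List (List A)))
        (hlen : ts.length = seqs.length),
      (∀ i (h : i < ts.length),
        IsDecomp Term (ts.get ⟨i, h⟩) (seqs.get ⟨i, hlen ▸ h⟩)) →
      decomp ts.flatten = seqs.flatten) ∧
    (∀ (ts : List (List A)) (i : ℕ), i < ts.length →
      ∀ j < (decomp ts.flatten).length,
        (((decomp ts.flatten).take j).flatten).length < ((ts.take (i + 1)).flatten).length →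
        ((ts.take (i + 1)).flatten).length <
          (((decomp ts.flatten).take (j + 1)).flatten).length →
        ((ts.take (i + 1)).flatten).length ∉ boundaries (decomp ts.flatten)) := by
  refine ⟨fun ts seqs hlen htok => ?_,
    fun _ _ _ _ _ hlo hhi => not_mem_boundaries_of_lt_of_lt hlo hhi⟩
  have hforall : List.Forall₂ (IsDecomp Term) ts seqs :=
    List.forall₂_iff_get.2 ⟨hlen, fun i h₁ _ => htok i h₁⟩
  exact (huniq _ _ (IsDecomp.flatten hforall)).symm

/-- `decomp` is the (assumed unique) terminal decomposition.
(i) If every decoded token of `ts` is a sequence of full terminals — token `i` carrying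
its own terminal factorization `seqs.get i` — then the terminal decomposition of the
concatenated output is exactly the concatenation of the per-token terminal sequences.
(ii) Conversely, if some token ends mid-terminal, i.e. its end position `p` falls
strictly inside a terminal of the decomposition of the output, then the terminal
boundary crossing that token does not coincide with the token boundary: `p` is not a
terminal boundary. -/
theorem full_terminal_tokens_decomp {A : Type} (Term : Set (List A))
    (decomp : List A → List (List A))
    (hdecomp : ∀ s, IsDecomp Term s (decomp s))
    (huniq : ∀ s parts, IsDecomp Term s parts → parts = decomp s) :
    (∀ (ts : List (List A)) (seqs : List (List (List A)))
        (hlen : ts.length = seqs.length),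
      (∀ i (h : i < ts.length),
        IsDecomp Term (ts.get ⟨i, h⟩) (seqs.get ⟨i, hlen ▸ h⟩)) →
      decomp ts.flatten = seqs.flatten) ∧
    (∀ (ts : List (List A)) (i : ℕ), i < ts.length →
      ∀ j < (decomp ts.flatten).length,
        (((decomp ts.flatten).take j).flatten).length < ((ts.take (i + 1)).flatten).length →
        ((ts.take (i + 1)).flatten).length <
          (((decomp ts.flatten).take (j + 1)).flatten).length →
        ((ts.take (i + 1)).flatten).length ∉ boundaries (decomp ts.flatten)) :=
  full_terminal_tokens_decomp_general Term decomp huniq
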